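/- Let α be an assignment of jobs to machines whose makespan is at most 2T and whose average machine load equals L, where 0 < L ≤ T. Suppose the instance has feasibility factor ε ∈ (0,1] with respect to T with ε ≥ L/T, and suppose that for every machine i, the total processing time on i of all jobs assigned to i except one job of maximum processing time on i is at most T (the Shmoys–Tardos property). Then there exists an assignment β of the jobs to machines whose makespan is at most T + L/ε ≤ 2T. -/

import Mathlib

/-- The load of machine `i` under assignment `α`, with processing times `p i j`. -/
noncomputable def mload {Mach J : Type*} [Fintype J] [DecidableEq Mach]
    (p : Mach → J → ℝ) (α : J → Mach) (i : Mach) : ℝ :=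
  ∑ j ∈ Finset.univ.filter (fun j => α j = i), p i j

/-!
Call a machine loaded if its load exceeds `L/ε` and overloaded if it exceeds `T + L/ε ≥ 2L/ε`.
As the total load is `L m`, loaded machines number at most `ε m` even when the overloaded ones
are counted twice. So the largest job of each overloaded machine has at least
`ε m - #loaded ≥ #overloaded` legal machines that are not loaded, and Hall's theorem moves these
jobs to distinct such machines. A receiving machine then carries at most `L/ε + T`, an overloaded
machine keeps at most `T` by the Shmoys–Tardos property, and any other machine keeps its load,
which is at most `T + L/ε`.
-/

open Finset

lemma card_add_card_mul_le_sum {ι : Type*} [Fintype ι] (ℓ : ι → ℝ) (hℓ : ∀ i, 0 ≤ ℓ i)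
    {a b : ℝ} (hab : 2 * a ≤ b) :
    (#{i | a < ℓ i} + #{i | b < ℓ i} : ℝ) * a ≤ ∑ i, ℓ i := by
  have key : ∀ i, ((if a < ℓ i then a else 0) + if b < ℓ i then a else 0) ≤ ℓ i := by
    intro i
    split_ifs <;> linarith [hℓ i]
  calc _ = ∑ i, ((if a < ℓ i then a else 0) + if b < ℓ i then a else 0) := by
        simp [sum_add_distrib, sum_ite, add_mul]
    _ ≤ _ := sum_le_sum fun i _ => key i

lemma exists_injOn_mem_of_card_le {ι α : Type*} [DecidableEq α] [Nonempty α] (s : Finset ι)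
    (t : ι → Finset α) (h : ∀ i ∈ s, #s ≤ #(t i)) :
    ∃ f : ι → α, Set.InjOn f s ∧ ∀ i ∈ s, f i ∈ t i := by
  obtain ⟨f, hf_inj, hf_mem⟩ :=
    (all_card_le_biUnion_card_iff_exists_injective fun i : s => t i).1 fun u => by
      obtain rfl | ⟨i, hi⟩ := u.eq_empty_or_nonempty
      · simp
      calc #u ≤ #s := (card_le_univ u).trans (Fintype.card_coe s).le
        _ ≤ #(t i) := h i i.2
        _ ≤ #(u.biUnion fun i : s => t i) :=
          card_le_card (subset_biUnion_of_mem (fun i : s => t i) hi)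
  obtain ⟨F, hF⟩ : ∃ F : ι → α, ∀ i : s, F i = f i :=
    ⟨_, Subtype.val_injective.extend_apply f fun _ => Classical.arbitrary α⟩
  refine ⟨F, fun i hi j hj hij => ?_, fun i hi => hF ⟨i, hi⟩ ▸ hf_mem ⟨i, hi⟩⟩
  rw [hF ⟨i, hi⟩, hF ⟨j, hj⟩] at hij
  exact congrArg Subtype.val (hf_inj hij)

section

variable {Mach J : Type*} [Fintype J] [DecidableEq Mach]

lemma mload_nonneg {p : Mach → J → ℝ} (hp : ∀ i j, 0 ≤ p i j) (α : J → Mach) (i : Mach) :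
    0 ≤ mload p α i :=
  sum_nonneg fun j _ => hp i j

lemma exists_eq_of_mload_ne_zero {p : Mach → J → ℝ} {α : J → Mach} {i : Mach}
    (h : mload p α i ≠ 0) : ∃ j, α j = i := by
  obtain ⟨j, hj⟩ := nonempty_of_sum_ne_zero h
  exact ⟨j, (mem_filter.1 hj).2⟩

variable [DecidableEq J]

def ShmoysTardos (p : Mach → J → ℝ) (α : J → Mach) (T : ℝ) : Prop :=
  ∀ i : Mach, ∀ jm : J, α jm = i → (∀ j, α j = i → p i j ≤ p i jm) →
    ∑ j with α j = i ∧ j ≠ jm, p i j ≤ T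

lemma sum_filter_notMem_le_mload {p : Mach → J → ℝ} (hp : ∀ i j, 0 ≤ p i j) (α : J → Mach)
    (D : Finset J) (k : Mach) :
    ∑ j with α j = k ∧ j ∉ D, p k j ≤ mload p α k :=
  sum_le_sum_of_subset_of_nonneg (fun j hj => by simp_all) fun j _ _ => hp k j

/-- `D` takes one job of maximum processing time from each machine of `S`. -/
lemma ShmoysTardos.exists_sum_filter_notMem_le {p : Mach → J → ℝ}
    (hp : ∀ i j, 0 ≤ p i j) {α : J → Mach} {T : ℝ} (hST : ShmoysTardos p α T)
    (S : Finset Mach) (hS : ∀ i ∈ S, ∃ j, α j = i) :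
    ∃ D : Finset J, #D ≤ #S ∧ ∀ k ∈ S, ∑ j with α j = k ∧ j ∉ D, p k j ≤ T := by
  have hmax : ∀ i : S, ∃ jm, α jm = i ∧ ∀ j, α j = i → p i j ≤ p i jm := by
    rintro ⟨i, hi⟩
    obtain ⟨j, hj⟩ := hS i hi
    obtain ⟨jm, hjm, hle⟩ :=
      exists_max_image {j | α j = i} (p i) ⟨j, mem_filter.2 ⟨mem_univ j, hj⟩⟩
    exact ⟨jm, (mem_filter.1 hjm).2, fun j hj => hle j (mem_filter.2 ⟨mem_univ j, hj⟩)⟩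
  choose jm hjm_eq hjm_max using hmax
  refine ⟨univ.image jm, card_image_le.trans (card_univ.trans (Fintype.card_coe S)).le,
    fun k hk => ?_⟩
  calc ∑ j with α j = k ∧ j ∉ univ.image jm, p k j
      ≤ ∑ j with α j = k ∧ j ≠ jm ⟨k, hk⟩, p k j := by
        refine sum_le_sum_of_subset_of_nonneg (fun j hj => ?_) fun j _ _ => hp k j
        simp only [mem_filter, mem_univ, true_and] at hj ⊢
        exact ⟨hj.1, fun h => hj.2 (h ▸ mem_image_of_mem jm (mem_univ _))⟩
    _ ≤ T := hST k _ (hjm_eq ⟨k, hk⟩) (hjm_max ⟨k, hk⟩)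

lemma mload_piecewise_le {p : Mach → J → ℝ} (hp : ∀ i j, 0 ≤ p i j) {α g : J → Mach}
    {D : Finset J} (hg : Set.InjOn g D) (k : Mach) {c : ℝ}
    (hin : ∀ j ∈ D, g j = k → p k j + mload p α k ≤ c)
    (hstay : ∑ j with α j = k ∧ j ∉ D, p k j ≤ c) :
    mload p (fun j => if j ∈ D then g j else α j) k ≤ c := by
  have hsplit : mload p (fun j => if j ∈ D then g j else α j) k =
      ∑ j ∈ D with g j = k, p k j + ∑ j with α j = k ∧ j ∉ D, p k j := by
    rw [mload, ← sum_union <| disjoint_left.2 fun j h₁ h₂ =>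
      (mem_filter.1 h₂).2.2 (mem_filter.1 h₁).1]
    congr 1
    ext j
    by_cases hj : j ∈ D <;> simp [hj]
  rw [hsplit]
  by_cases hmoved : ∃ j ∈ D, g j = k
  · obtain ⟨j₀, hj₀, hgj₀⟩ := hmoved
    have hsingle : {j ∈ D | g j = k} = {j₀} :=
      eq_singleton_iff_unique_mem.2 ⟨mem_filter.2 ⟨hj₀, hgj₀⟩,
        fun j hj => hg (mem_filter.1 hj).1 hj₀ ((mem_filter.1 hj).2.trans hgj₀.symm)⟩
    rw [hsingle, sum_singleton]
    linarith [hin j₀ hj₀ hgj₀, sum_filter_notMem_le_mload hp α D k]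
  · rw [filter_eq_empty_iff.2 fun j hj hgj => hmoved ⟨j, hj, hgj⟩, sum_empty, zero_add]
    exact hstay

end

theorem exists_improved_assignment_general {Mach J : Type*} [Fintype Mach]
    [Fintype J] [DecidableEq Mach] [DecidableEq J]
    (p : Mach → J → ℝ) (hp : ∀ i j, 0 ≤ p i j)
    (α : J → Mach) (T L ε : ℝ)
    (hL : 0 < L) (hLT : L ≤ T)
    (hε0 : 0 < ε) (hεLT : L / T ≤ ε)
    (hfeas : ∀ j : J, ε * (Fintype.card Mach : ℝ)
      ≤ ((Finset.univ.filter (fun i => p i j ≤ T)).card : ℝ))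
    (havg : (∑ i, mload p α i) / (Fintype.card Mach : ℝ) = L)
    (hST : ∀ i : Mach, ∀ jm : J, α jm = i → (∀ j, α j = i → p i j ≤ p i jm) →
      ∑ j ∈ Finset.univ.filter (fun j => α j = i ∧ j ≠ jm), p i j ≤ T) :
    (∃ β : J → Mach, ∀ i, mload p β i ≤ T + L / ε) ∧ T + L / ε ≤ 2 * T := by
  have hLεT : L / ε ≤ T := (div_le_comm₀ (hL.trans_le hLT) hε0).1 hεLT
  have hLε : 0 < L / ε := div_pos hL hε0
  refine ⟨?_, by linarith⟩
  have : Nonempty Mach :=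
    Fintype.card_pos_iff.1 <| Nat.pos_of_ne_zero fun h => by simp [h] at havg; linarith
  set loaded : Finset Mach := {i | L / ε < mload p α i}
  set overloaded : Finset Mach := {i | T + L / ε < mload p α i}
  have hcount : (#loaded + #overloaded : ℝ) ≤ ε * Fintype.card Mach := by
    have h := card_add_card_mul_le_sum (mload p α) (mload_nonneg hp α) (a := L / ε)
      (b := T + L / ε) (by linarith)
    rw [(div_eq_iff (by positivity)).1 havg,
      show L * Fintype.card Mach = ε * Fintype.card Mach * (L / ε) by field_simp] at h
    exact le_of_mul_le_mul_right h hLε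
  obtain ⟨D, hDcard, hstay⟩ := ShmoysTardos.exists_sum_filter_notMem_le hp hST overloaded
    fun i hi => exists_eq_of_mload_ne_zero (by linarith [(mem_filter.1 hi).2])
  obtain ⟨g, hginj, hg⟩ :=
    exists_injOn_mem_of_card_le D (fun j => ({k | p k j ≤ T} : Finset Mach) \ loaded) fun j _ => by
      have hcard : #loaded + #overloaded ≤ #{k | p k j ≤ T} := by
        exact_mod_cast hcount.trans (hfeas j)
      have := card_le_card_sdiff_add_card (s := ({k | p k j ≤ T} : Finset Mach)) (t := loaded)
      omega
  refine ⟨fun j => if j ∈ D then g j else α j, fun k => mload_piecewise_le hp hginj k ?_ ?_⟩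
  · rintro j hj rfl
    obtain ⟨hlegal, hnot_loaded⟩ := mem_sdiff.1 (hg j hj)
    simp only [mem_filter, mem_univ, true_and, not_lt, loaded] at hlegal hnot_loaded
    linarith
  · by_cases hk : k ∈ overloaded
    · linarith [hstay k hk]
    · simp only [mem_filter, mem_univ, true_and, not_lt, overloaded] at hk
      linarith [sum_filter_notMem_le_mload hp α D k]

/-- Suppose `α` has makespan at most `2T`, average machine load
`L` with `0 < L ≤ T`, the instance has feasibility factor `ε ∈ (0,1]` w.r.t.
`T` with `ε ≥ L/T`, and `α` has the Shmoys–Tardos property: on every machine,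
the total processing time of the jobs assigned to it except one job of maximum
processing time is at most `T`.  Then there exists an assignment `β` with
makespan at most `T + L/ε ≤ 2T`. -/
theorem exists_improved_assignment {Mach J : Type*} [Fintype Mach] [Nonempty Mach]
    [Fintype J] [DecidableEq Mach] [DecidableEq J]
    (p : Mach → J → ℝ) (hp : ∀ i j, 0 ≤ p i j)
    (α : J → Mach) (T L ε : ℝ)
    (hL : 0 < L) (hLT : L ≤ T)
    (hε0 : 0 < ε) (hε1 : ε ≤ 1) (hεLT : L / T ≤ ε)
    (hfeas : ∀ j : J, ε * (Fintype.card Mach : ℝ)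
      ≤ ((Finset.univ.filter (fun i => p i j ≤ T)).card : ℝ))
    (hmak : ∀ i, mload p α i ≤ 2 * T)
    (havg : (∑ i, mload p α i) / (Fintype.card Mach : ℝ) = L)
    (hST : ∀ i : Mach, ∀ jm : J, α jm = i → (∀ j, α j = i → p i j ≤ p i jm) →
      ∑ j ∈ Finset.univ.filter (fun j => α j = i ∧ j ≠ jm), p i j ≤ T) :
    (∃ β : J → Mach, ∀ i, mload p β i ≤ T + L / ε) ∧ T + L / ε ≤ 2 * T :=
  exists_improved_assignment_general p hp α T L ε hL hLT hε0 hεLT hfeas havg hST
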